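/- arXiv:2212.09037 — 2 statements merged into one kernel-verified Lean document; each statement's English description precedes it below -/
import Mathlib

section
/- Let a,b,c,d be points on the unit circle S¹ occurring in this positive order with ac ≠ bd, let f = LIS[a,c,b,d] be the intersection point of the Euclidean lines L[a,c] and L[b,d], and suppose f ≠ 0. If m ∈ J*[a,c] ∩ J*[b,d], then f ∈ 𝔹² and m is the hyperbolic midpoint of 0 and f, i.e., ρ(0,m) = ρ(m,f) = ρ(0,f)/2. -/
open ComplexConjugate

/-- The intersection point of the Euclidean lines through `a, b` and through `c, d`. -/
noncomputable def LIS (a b c d : ℂ) : ℂ :=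
  ((conj a * b - a * conj b) * (c - d) - (conj c * d - c * conj d) * (a - b)) /
    ((conj a - conj b) * (c - d) - (conj c - conj d) * (a - b))

open scoped Classical in
/-- The hyperbolic line in the unit disk with endpoints `a, c` on the unit circle. -/
noncomputable def Jstar (a c : ℂ) : Set ℂ :=
  if c = -a then
    {z : ℂ | ‖z‖ < 1 ∧ ∃ r : ℝ, z / a = (r : ℂ)}
  else
    {z : ℂ | ‖z‖ < 1 ∧
      ((‖z‖ : ℂ) ^ 2 + 1 =
        conj (2 * (a - c) / (a * conj c - conj a * c)) * z +
          (2 * (a - c) / (a * conj c - conj a * c)) * conj z)}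

/-- The hyperbolic metric of the unit disk. -/
noncomputable def rho (x y : ℂ) : ℝ :=
  2 * Real.arsinh (‖x - y‖ /
    Real.sqrt ((1 - ‖x‖ ^ 2) * (1 - ‖y‖ ^ 2)))

/-!
For unit vectors `a ≠ c` the Euclidean line through `a, c` is `z + a c z̄ = a + c`, and the
hyperbolic line `J*[a,c]` is `z + a c z̄ = t (a + c)` with `t = (1 + |z|²)/2`. Hence `m` and
`t f` solve the same pair of conjugate-linear equations, whose solution is unique when
`ac ≠ bd`; so `m = t f`. Then `|f| = 2|m|/(1 + |m|²) = tanh (2 artanh |m|)`, while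
`ρ(0, z) = 2 artanh |z|`.
-/

namespace Real

theorem arsinh_div_sqrt_one_sub_sq {x : ℝ} (hx : x ∈ Set.Ioo (-1) 1) :
    arsinh (x / √(1 - x ^ 2)) = artanh x := by
  rw [← sinh_artanh hx, arsinh_sinh]

theorem artanh_two_mul_div_one_add_sq {x : ℝ} (hx : x ∈ Set.Ioo (-1) 1) :
    artanh (2 * x / (1 + x ^ 2)) = 2 * artanh x := by
  have hcosh : cosh (artanh x) ≠ 0 := (cosh_pos _).ne'
  have htanh : tanh (2 * artanh x) = 2 * x / (1 + x ^ 2) := by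
    conv_rhs => rw [← tanh_artanh hx]
    rw [tanh_eq_sinh_div_cosh, tanh_eq_sinh_div_cosh, sinh_two_mul, cosh_two_mul]
    field_simp
  rw [← htanh, artanh_tanh]

end Real

theorem rho_zero_left {z : ℂ} (hz : ‖z‖ < 1) : rho 0 z = 2 * Real.artanh ‖z‖ := by
  rw [rho, ← Real.arsinh_div_sqrt_one_sub_sq ⟨by linarith [norm_nonneg z], hz⟩]
  simp

section Midpoint

variable {m f : ℂ}

theorem norm_eq_of_eq_ofReal_mul (hmf : m = ((1 + ‖m‖ ^ 2) / 2 : ℝ) * f) :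
    ‖f‖ = 2 * ‖m‖ / (1 + ‖m‖ ^ 2) := by
  have h : ‖m‖ = (1 + ‖m‖ ^ 2) / 2 * ‖f‖ := by
    conv_lhs => rw [hmf]
    rw [norm_mul, Complex.norm_real, Real.norm_of_nonneg (by positivity)]
  field_simp
  linarith

theorem rho_eq_rho_zero_of_eq_ofReal_mul (hm : ‖m‖ < 1)
    (hmf : m = ((1 + ‖m‖ ^ 2) / 2 : ℝ) * f) : rho m f = rho 0 m := by
  set s := ‖m‖
  have hs1 : 0 < 1 - s ^ 2 := by nlinarith [norm_nonneg m]
  have hF := norm_eq_of_eq_ofReal_mul hmf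
  have hsub : ‖m - f‖ = s * (1 - s ^ 2) / (1 + s ^ 2) := by
    have : m - f = ((s ^ 2 - 1) / 2 : ℝ) * f := by
      conv_lhs => rw [hmf]
      push_cast
      ring
    rw [this, norm_mul, Complex.norm_real, Real.norm_of_nonpos (by linarith), hF]
    field_simp
    ring
  have hsqrt : √((1 - s ^ 2) * (1 - ‖f‖ ^ 2)) = √(1 - s ^ 2) * ((1 - s ^ 2) / (1 + s ^ 2)) := by
    have : 1 - ‖f‖ ^ 2 = ((1 - s ^ 2) / (1 + s ^ 2)) ^ 2 := by
      rw [hF]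
      field_simp
      ring
    rw [Real.sqrt_mul hs1.le, this, Real.sqrt_sq (by positivity)]
  rw [rho, rho_zero_left hm, hsub, hsqrt,
    ← Real.arsinh_div_sqrt_one_sub_sq ⟨by linarith [norm_nonneg m], hm⟩]
  have : √(1 - s ^ 2) ≠ 0 := (Real.sqrt_pos.mpr hs1).ne'
  field_simp

theorem hyperbolic_midpoint_of_eq_ofReal_mul (hm : ‖m‖ < 1)
    (hmf : m = ((1 + ‖m‖ ^ 2) / 2 : ℝ) * f) :
    ‖f‖ < 1 ∧ rho 0 m = rho 0 f / 2 ∧ rho m f = rho 0 f / 2 := by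
  have hs : ‖m‖ ∈ Set.Ioo (-1) 1 := ⟨by linarith [norm_nonneg m], hm⟩
  have hF := norm_eq_of_eq_ofReal_mul hmf
  have hf1 : ‖f‖ < 1 := by
    rw [hF, div_lt_one (by positivity)]
    nlinarith [sq_pos_of_pos (sub_pos.mpr hm)]
  have hrho : rho 0 f = 2 * rho 0 m := by
    rw [rho_zero_left hf1, rho_zero_left hm, hF, Real.artanh_two_mul_div_one_add_sq hs]
  refine ⟨hf1, by linarith, ?_⟩
  rw [rho_eq_rho_zero_of_eq_ofReal_mul hm hmf]
  linarith

end Midpoint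

theorem Complex.exp_I_mul_ne_exp_I_mul {θ φ : ℝ} (h₁ : θ < φ) (h₂ : φ < θ + 2 * Real.pi) :
    Complex.exp (Complex.I * θ) ≠ Complex.exp (Complex.I * φ) := by
  intro h
  obtain ⟨n, hn⟩ := Complex.exp_eq_exp_iff_exists_int.mp h
  have hθφ : θ = φ + n * (2 * Real.pi) := by simpa using congrArg Complex.im hn
  have hπ := Real.pi_pos
  have hn₀ : (n : ℝ) < 0 := by nlinarith
  have hn₁ : (-1 : ℝ) < n := by nlinarith
  have : n < 0 := by exact_mod_cast hn₀
  have : -1 < n := by exact_mod_cast hn₁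
  omega

theorem eq_of_add_mul_conj_eq {p q u v z w : ℂ} (hpq : p ≠ q)
    (hz₁ : z + p * conj z = u) (hz₂ : z + q * conj z = v)
    (hw₁ : w + p * conj w = u) (hw₂ : w + q * conj w = v) : z = w := by
  have h : (p - q) * conj (z - w) = 0 := by
    rw [map_sub]
    linear_combination hz₁ - hz₂ - hw₁ + hw₂
  have hconj : conj (z - w) = 0 := (mul_eq_zero.mp h).resolve_left (sub_ne_zero.mpr hpq)
  rw [map_sub, sub_eq_zero] at hconj
  linear_combination hz₁ - hw₁ - p * hconj

section UnitCircle

variable {a b c d : ℂ}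

theorem add_mul_conj_of_mem_Jstar (ha : ‖a‖ = 1) (hc : ‖c‖ = 1) (hac : a ≠ c) {m : ℂ}
    (hm : m ∈ Jstar a c) :
    ‖m‖ < 1 ∧ m + a * c * conj m = ((1 + ‖m‖ ^ 2) / 2 : ℝ) * (a + c) := by
  have ha₀ : a ≠ 0 := norm_ne_zero_iff.mp (ha ▸ one_ne_zero)
  have hc₀ : c ≠ 0 := norm_ne_zero_iff.mp (hc ▸ one_ne_zero)
  have hca : conj a = a⁻¹ := (Complex.inv_eq_conj ha).symm
  have hcc : conj c = c⁻¹ := (Complex.inv_eq_conj hc).symm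
  unfold Jstar at hm
  split_ifs at hm with hca'
  · obtain ⟨hm1, r, hr⟩ := hm
    refine ⟨hm1, ?_⟩
    rw [div_eq_iff ha₀] at hr
    rw [hr, hca', map_mul, hca, Complex.conj_ofReal]
    field_simp
    ring
  · obtain ⟨hm1, hm2⟩ := hm
    refine ⟨hm1, ?_⟩
    have hsum : a + c ≠ 0 := fun h => hca' (by linear_combination h)
    have hdiff : a - c ≠ 0 := sub_ne_zero.mpr hac
    simp only [map_div₀, map_mul, map_sub, map_ofNat, map_inv₀, hca, hcc, inv_inv] at hm2
    have hsq : a ^ 2 - c ^ 2 ≠ 0 := by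
      rw [sq_sub_sq]; exact mul_ne_zero hsum hdiff
    have hsq' : c ^ 2 - a ^ 2 ≠ 0 := fun h => hsq (by linear_combination -h)
    field_simp at hm2
    apply mul_left_cancel₀ (mul_ne_zero hsq (sub_ne_zero.mpr hac.symm))
    push_cast
    linear_combination (-1 / 2 : ℂ) * hm2

theorem LIS_eq_of_norm_eq_one (ha : ‖a‖ = 1) (hb : ‖b‖ = 1) (hc : ‖c‖ = 1) (hd : ‖d‖ = 1)
    (hac : a ≠ c) (hbd : b ≠ d) (hnp : a * c ≠ b * d) :
    LIS a c b d = (a * c * (b + d) - b * d * (a + c)) / (a * c - b * d) := by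
  have ha₀ : a ≠ 0 := norm_ne_zero_iff.mp (ha ▸ one_ne_zero)
  have hb₀ : b ≠ 0 := norm_ne_zero_iff.mp (hb ▸ one_ne_zero)
  have hc₀ : c ≠ 0 := norm_ne_zero_iff.mp (hc ▸ one_ne_zero)
  have hd₀ : d ≠ 0 := norm_ne_zero_iff.mp (hd ▸ one_ne_zero)
  have hnp' : a * c - b * d ≠ 0 := sub_ne_zero.mpr hnp
  rw [LIS, ← Complex.inv_eq_conj ha, ← Complex.inv_eq_conj hb, ← Complex.inv_eq_conj hc,
    ← Complex.inv_eq_conj hd]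
  have hden : (a⁻¹ - c⁻¹) * (b - d) - (b⁻¹ - d⁻¹) * (a - c) =
      (a - c) * (b - d) * (a * c - b * d) / (a * b * c * d) := by
    field_simp
    ring
  have hden₀ : (a - c) * (b - d) * (a * c - b * d) ≠ 0 :=
    mul_ne_zero (mul_ne_zero (sub_ne_zero.mpr hac) (sub_ne_zero.mpr hbd)) hnp'
  rw [hden, div_eq_div_iff (div_ne_zero hden₀ (by simp [*])) hnp']
  field_simp
  ring

theorem LIS_add_mul_conj (ha : ‖a‖ = 1) (hb : ‖b‖ = 1) (hc : ‖c‖ = 1) (hd : ‖d‖ = 1)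
    (hac : a ≠ c) (hbd : b ≠ d) (hnp : a * c ≠ b * d) :
    LIS a c b d + a * c * conj (LIS a c b d) = a + c ∧
      LIS a c b d + b * d * conj (LIS a c b d) = b + d := by
  have ha₀ : a ≠ 0 := norm_ne_zero_iff.mp (ha ▸ one_ne_zero)
  have hb₀ : b ≠ 0 := norm_ne_zero_iff.mp (hb ▸ one_ne_zero)
  have hc₀ : c ≠ 0 := norm_ne_zero_iff.mp (hc ▸ one_ne_zero)
  have hd₀ : d ≠ 0 := norm_ne_zero_iff.mp (hd ▸ one_ne_zero)
  have hnp' : a * c - b * d ≠ 0 := sub_ne_zero.mpr hnp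
  have hf := LIS_eq_of_norm_eq_one ha hb hc hd hac hbd hnp
  have hfc : conj (LIS a c b d) = (a + c - (b + d)) / (a * c - b * d) := by
    have hnp'' : a⁻¹ * c⁻¹ - b⁻¹ * d⁻¹ ≠ 0 := by
      rw [← mul_inv, ← mul_inv, sub_ne_zero]
      exact fun h => hnp (inv_injective h)
    simp only [hf, map_div₀, map_sub, map_mul, map_add, ← Complex.inv_eq_conj ha,
      ← Complex.inv_eq_conj hb, ← Complex.inv_eq_conj hc, ← Complex.inv_eq_conj hd]
    rw [div_eq_div_iff hnp'' hnp']
    field_simp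
    ring
  rw [hfc, hf]
  constructor <;> field_simp <;> ring

end UnitCircle

theorem stmt17_general (θ₁ θ₂ θ₃ θ₄ : ℝ)
    (h12 : θ₁ < θ₂) (h23 : θ₂ < θ₃) (h34 : θ₃ < θ₄) (h41 : θ₄ < θ₁ + 2 * Real.pi)
    (a b c d : ℂ)
    (hea : a = Complex.exp (Complex.I * (θ₁ : ℂ)))
    (heb : b = Complex.exp (Complex.I * (θ₂ : ℂ)))
    (hec : c = Complex.exp (Complex.I * (θ₃ : ℂ)))
    (hed : d = Complex.exp (Complex.I * (θ₄ : ℂ)))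
    (hnp : a * c ≠ b * d)
    (f : ℂ) (hf : f = LIS a c b d)
    (m : ℂ) (hmem : m ∈ Jstar a c ∩ Jstar b d) :
    ‖f‖ < 1 ∧ rho 0 m = rho 0 f / 2 ∧ rho m f = rho 0 f / 2 := by
  have ha : ‖a‖ = 1 := hea ▸ Complex.norm_exp_I_mul_ofReal θ₁
  have hb : ‖b‖ = 1 := heb ▸ Complex.norm_exp_I_mul_ofReal θ₂
  have hc : ‖c‖ = 1 := hec ▸ Complex.norm_exp_I_mul_ofReal θ₃
  have hd : ‖d‖ = 1 := hed ▸ Complex.norm_exp_I_mul_ofReal θ₄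
  have hac : a ≠ c := hea ▸ hec ▸ Complex.exp_I_mul_ne_exp_I_mul (by linarith) (by linarith)
  have hbd : b ≠ d := heb ▸ hed ▸ Complex.exp_I_mul_ne_exp_I_mul (by linarith) (by linarith)
  obtain ⟨hfac, hfbd⟩ := hf ▸ LIS_add_mul_conj ha hb hc hd hac hbd hnp
  obtain ⟨hm, hmac⟩ := add_mul_conj_of_mem_Jstar ha hc hac hmem.1
  obtain ⟨-, hmbd⟩ := add_mul_conj_of_mem_Jstar hb hd hbd hmem.2
  set t : ℝ := (1 + ‖m‖ ^ 2) / 2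
  have hmf : m = t * f := by
    refine eq_of_add_mul_conj_eq hnp hmac hmbd ?_ ?_ <;> rw [map_mul, Complex.conj_ofReal]
    · linear_combination (t : ℂ) * hfac
    · linear_combination (t : ℂ) * hfbd
  exact hyperbolic_midpoint_of_eq_ofReal_mul hm hmf

theorem stmt17 (θ₁ θ₂ θ₃ θ₄ : ℝ)
    (h12 : θ₁ < θ₂) (h23 : θ₂ < θ₃) (h34 : θ₃ < θ₄) (h41 : θ₄ < θ₁ + 2 * Real.pi)
    (a b c d : ℂ)
    (hea : a = Complex.exp (Complex.I * (θ₁ : ℂ)))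
    (heb : b = Complex.exp (Complex.I * (θ₂ : ℂ)))
    (hec : c = Complex.exp (Complex.I * (θ₃ : ℂ)))
    (hed : d = Complex.exp (Complex.I * (θ₄ : ℂ)))
    (hnp : a * c ≠ b * d)
    (f : ℂ) (hf : f = LIS a c b d) (hf0 : f ≠ 0)
    (m : ℂ) (hmem : m ∈ Jstar a c ∩ Jstar b d) :
    ‖f‖ < 1 ∧ rho 0 m = rho 0 f / 2 ∧ rho m f = rho 0 f / 2 :=
  stmt17_general θ₁ θ₂ θ₃ θ₄ h12 h23 h34 h41 a b c d hea heb hec hed hnp f hf m hmem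
end

section
/- Let a,b ∈ 𝔹². (i) If a·conj(b) ∉ ℝ (a, b and 0 not collinear), then for every z ∈ ℂ: π(z) lies in the affine plane in ℝ³ through the three points π(a), π(b) and (0,0,1/2) if and only if |z − (a(1−|b|²) − b(1−|a|²))/(b·conj(a) − a·conj(b))| = |a−b|·|1 + a·conj(b)|/|a·conj(b) − conj(a)·b|; this circle is the stereographic projection of the great circle through π(a) and π(b). (ii) If |a| ≠ |b|, then for every z ∈ ℂ: the Euclidean inner product of π(z) − (0,0,1/2) with π(b) − π(a) is zero if and only if |z − (b(1+|a|²) − a(1+|b|²))/(|a|² − |b|²)| = |a−b|·√((1+|a|²)(1+|b|²))/| |a|² − |b|² |; this circle is the stereographic projection of the great circle through the chordal midpoint of a and b that is orthogonal to the great circle through π(a) and π(b). -/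
/-!
Since `π z - (0, 0, 1/2) = (1 + |z|²)⁻¹ • (Re z, Im z, (|z|² - 1)/2)`, both conditions on `π z`
are the vanishing of a real expression that is affine in `Re z`, `Im z`, `|z|²`: a `3 × 3`
determinant for the plane through the centre, `π a` and `π b`, and an inner product for the
plane through the centre orthogonal to `π b - π a`. In both cases, clearing the denominator of
the circle equation and squaring, the difference of the two sides is a nonzero constant multiple
of that expression.
-/

open ComplexConjugate

/-- The stereographic projection of the complex plane onto the Riemann sphere
with center `(0, 0, 1/2)` and radius `1/2` in `ℝ³`. -/
noncomputable def stereo (z : ℂ) : ℝ × ℝ × ℝ :=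
  (z.re / (1 + ‖z‖ ^ 2), z.im / (1 + ‖z‖ ^ 2),
    ‖z‖ ^ 2 / (1 + ‖z‖ ^ 2))

/-- The Euclidean inner product on `ℝ³ = ℝ × ℝ × ℝ`. -/
def dot3 (p q : ℝ × ℝ × ℝ) : ℝ :=
  p.1 * q.1 + p.2.1 * q.2.1 + p.2.2 * q.2.2

theorem mem_affineSpan_triple_iff {k V P : Type*} [Ring k] [AddCommGroup V] [Module k V]
    [AddTorsor V P] {p q c x : P} :
    x ∈ affineSpan k {p, q, c} ↔ x -ᵥ c ∈ Submodule.span k {p -ᵥ c, q -ᵥ c} := by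
  have hc : c ∈ ({p, q, c} : Set P) := by simp
  rw [← AffineSubspace.vsub_right_mem_direction_iff_mem (mem_affineSpan k hc),
    direction_affineSpan, vectorSpan_eq_span_vsub_set_right k hc]
  simp [Set.image_insert_eq, Set.pair_comm _ (0 : V), Set.insert_comm _ (0 : V)]

theorem Submodule.span_pair_smul_eq {K M : Type*} [Field K] [AddCommGroup M] [Module K M]
    {r s : K} (hr : r ≠ 0) (hs : s ≠ 0) (u v : M) :
    span K {r • u, s • v} = span K {u, v} := by
  rw [span_insert, span_insert u, span_singleton_smul_eq hs.isUnit,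
    span_singleton_smul_eq hr.isUnit]

def det3 {K : Type*} [CommRing K] (u v w : K × K × K) : K :=
  u.1 * (v.2.1 * w.2.2 - v.2.2 * w.2.1) - u.2.1 * (v.1 * w.2.2 - v.2.2 * w.1) +
    u.2.2 * (v.1 * w.2.1 - v.2.1 * w.1)

theorem mem_span_pair_iff_det3_eq_zero {K : Type*} [Field K] {u v x : K × K × K}
    (h : u.1 * v.2.1 - u.2.1 * v.1 ≠ 0) :
    x ∈ Submodule.span K {u, v} ↔ det3 u v x = 0 := by
  rw [Submodule.mem_span_pair]
  unfold det3
  constructor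
  · rintro ⟨s, t, rfl⟩
    simp only [Prod.fst_add, Prod.snd_add, Prod.smul_fst, Prod.smul_snd, smul_eq_mul]
    ring
  · intro hx
    set δ := u.1 * v.2.1 - u.2.1 * v.1 with hδ
    refine ⟨(x.1 * v.2.1 - x.2.1 * v.1) / δ, (u.1 * x.2.1 - u.2.1 * x.1) / δ, ?_⟩
    refine Prod.ext ?_ (Prod.ext ?_ ?_) <;>
      simp only [Prod.fst_add, Prod.snd_add, Prod.smul_fst, Prod.smul_snd, smul_eq_mul] <;>
      field_simp <;> rw [hδ]
    · ring
    · ring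
    · linear_combination (-1 : K) * hx

theorem norm_sub_div_eq_div_norm_iff {𝕜 : Type*} [NormedField 𝕜] {p q z : 𝕜} {R : ℝ}
    (hq : q ≠ 0) :
    ‖z - p / q‖ = R / ‖q‖ ↔ ‖q * z - p‖ = R := by
  rw [← mul_div_cancel_left₀ z hq, ← sub_div, norm_div, mul_div_cancel_left₀ z hq,
    div_left_inj' (norm_ne_zero_iff.mpr hq)]

noncomputable def stereoLift (z : ℂ) : ℝ × ℝ × ℝ := (z.re, z.im, (‖z‖ ^ 2 - 1) / 2)

theorem stereo_sub_center (z : ℂ) :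
    stereo z - ((0 : ℝ), (0 : ℝ), (1 / 2 : ℝ)) = (1 + ‖z‖ ^ 2)⁻¹ • stereoLift z := by
  have : 1 + ‖z‖ ^ 2 ≠ 0 := by positivity
  simp only [stereo, stereoLift, Prod.mk_sub_mk, Prod.smul_mk, smul_eq_mul, sub_zero]
  refine Prod.ext ?_ (Prod.ext ?_ ?_) <;> field_simp
  ring

theorem dot3_stereo_sub_center_stereo_sub (a b z : ℂ) :
    dot3 (stereo z - ((0 : ℝ), (0 : ℝ), (1 / 2 : ℝ))) (stereo b - stereo a) =
      dot3 (stereoLift z) ((1 + ‖a‖ ^ 2) • stereoLift b - (1 + ‖b‖ ^ 2) • stereoLift a) /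
        ((1 + ‖z‖ ^ 2) * (1 + ‖a‖ ^ 2) * (1 + ‖b‖ ^ 2)) := by
  have : 1 + ‖z‖ ^ 2 ≠ 0 := by positivity
  have : 1 + ‖a‖ ^ 2 ≠ 0 := by positivity
  have : 1 + ‖b‖ ^ 2 ≠ 0 := by positivity
  simp only [stereo, stereoLift, dot3, Prod.mk_sub_mk, Prod.smul_mk, smul_eq_mul, sub_zero]
  field_simp
  ring

theorem sq_norm_greatCircle_eq (a b z : ℂ) :
    ‖(b * conj a - a * conj b) * z - (a * (1 - (‖b‖ : ℂ) ^ 2) - b * (1 - (‖a‖ : ℂ) ^ 2))‖ ^ 2 =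
      (‖a - b‖ * ‖1 + a * conj b‖) ^ 2 +
        8 * (a.re * b.im - a.im * b.re) * det3 (stereoLift a) (stereoLift b) (stereoLift z) := by
  simp only [mul_pow, ← Complex.ofReal_pow, Complex.sq_norm, stereoLift, det3,
    Complex.normSq_apply, Complex.mul_re, Complex.mul_im, Complex.sub_re, Complex.sub_im,
    Complex.add_re, Complex.add_im, Complex.one_re, Complex.one_im, Complex.ofReal_re,
    Complex.ofReal_im, Complex.conj_re, Complex.conj_im]
  ring

theorem sq_norm_orthogonalCircle_eq (a b z : ℂ) :
    ‖((‖a‖ : ℂ) ^ 2 - (‖b‖ : ℂ) ^ 2) * z -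
        (b * (1 + (‖a‖ : ℂ) ^ 2) - a * (1 + (‖b‖ : ℂ) ^ 2))‖ ^ 2 =
      ‖a - b‖ ^ 2 * ((1 + ‖a‖ ^ 2) * (1 + ‖b‖ ^ 2)) - 2 * (‖a‖ ^ 2 - ‖b‖ ^ 2) *
        dot3 (stereoLift z) ((1 + ‖a‖ ^ 2) • stereoLift b - (1 + ‖b‖ ^ 2) • stereoLift a) := by
  simp only [← Complex.ofReal_pow, Complex.sq_norm, stereoLift, dot3, Prod.mk_sub_mk,
    Prod.smul_mk, smul_eq_mul, Complex.normSq_apply, Complex.mul_re, Complex.mul_im,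
    Complex.sub_re, Complex.sub_im, Complex.add_re, Complex.add_im, Complex.one_re,
    Complex.one_im, Complex.ofReal_re, Complex.ofReal_im]
  ring

theorem re_mul_im_sub_im_mul_re_ne_zero {a b : ℂ} (h : a * conj b ∉ Set.range Complex.ofReal) :
    a.re * b.im - a.im * b.re ≠ 0 := by
  refine fun hδ => h ⟨(a * conj b).re, Complex.ext rfl ?_⟩
  simp only [Complex.ofReal_im, Complex.mul_im, Complex.conj_re, Complex.conj_im]
  linarith

theorem stmt19_general (a b : ℂ) :
    (a * conj b ∉ Set.range (Complex.ofReal) →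
      ∀ z : ℂ,
        (stereo z ∈ affineSpan ℝ
            ({stereo a, stereo b, ((0 : ℝ), (0 : ℝ), (1 / 2 : ℝ))} : Set (ℝ × ℝ × ℝ)) ↔
          ‖z -
              (a * (1 - (‖b‖ : ℂ) ^ 2) - b * (1 - (‖a‖ : ℂ) ^ 2)) /
                (b * conj a - a * conj b)‖ =
            ‖a - b‖ * ‖1 + a * conj b‖ /
              ‖a * conj b - conj a * b‖)) ∧
    (‖a‖ ≠ ‖b‖ →
      ∀ z : ℂ,
        (dot3 (stereo z - ((0 : ℝ), (0 : ℝ), (1 / 2 : ℝ))) (stereo b - stereo a) = 0 ↔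
          ‖z -
              (b * (1 + (‖a‖ : ℂ) ^ 2) - a * (1 + (‖b‖ : ℂ) ^ 2)) /
                ((‖a‖ : ℂ) ^ 2 - (‖b‖ : ℂ) ^ 2)‖ =
            ‖a - b‖ *
                Real.sqrt ((1 + ‖a‖ ^ 2) * (1 + ‖b‖ ^ 2)) /
              |‖a‖ ^ 2 - ‖b‖ ^ 2|)) := by
  constructor
  · intro hab z
    have hδ := re_mul_im_sub_im_mul_re_ne_zero hab
    have hq : b * conj a - a * conj b ≠ 0 := fun h => hδ <| by
      have := congrArg Complex.im h
      simp only [Complex.sub_im, Complex.mul_im, Complex.conj_re, Complex.conj_im,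
        Complex.zero_im] at this
      linarith
    have hnorm : ‖a * conj b - conj a * b‖ = ‖b * conj a - a * conj b‖ := by
      rw [← norm_neg, neg_sub, mul_comm (conj a)]
    rw [mem_affineSpan_triple_iff, vsub_eq_sub, vsub_eq_sub, vsub_eq_sub, stereo_sub_center,
      stereo_sub_center, stereo_sub_center,
      Submodule.span_pair_smul_eq (by positivity) (by positivity),
      Submodule.smul_mem_iff _ (by positivity), mem_span_pair_iff_det3_eq_zero hδ, hnorm,
      norm_sub_div_eq_div_norm_iff hq, ← sq_eq_sq₀ (norm_nonneg _) (by positivity),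
      sq_norm_greatCircle_eq, add_eq_left, mul_eq_zero, or_iff_right (by simpa using hδ)]
  · intro hab z
    have hd : ‖a‖ ^ 2 - ‖b‖ ^ 2 ≠ 0 :=
      fun h => hab ((sq_eq_sq₀ (norm_nonneg a) (norm_nonneg b)).1 (sub_eq_zero.1 h))
    have hq : (‖a‖ : ℂ) ^ 2 - (‖b‖ : ℂ) ^ 2 = ((‖a‖ ^ 2 - ‖b‖ ^ 2 : ℝ) : ℂ) := by push_cast; ring
    have hqn : |‖a‖ ^ 2 - ‖b‖ ^ 2| = ‖(‖a‖ : ℂ) ^ 2 - (‖b‖ : ℂ) ^ 2‖ := by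
      rw [hq, Complex.norm_real, Real.norm_eq_abs]
    rw [dot3_stereo_sub_center_stereo_sub, div_eq_zero_iff, or_iff_left (by positivity), hqn,
      norm_sub_div_eq_div_norm_iff (hq ▸ Complex.ofReal_ne_zero.2 hd),
      ← sq_eq_sq₀ (norm_nonneg _) (by positivity), mul_pow, Real.sq_sqrt (by positivity),
      sq_norm_orthogonalCircle_eq, sub_eq_self, mul_eq_zero, or_iff_right (by simpa using hd)]

theorem stmt19 (a b : ℂ) (ha : ‖a‖ < 1) (hb : ‖b‖ < 1) :
    (a * conj b ∉ Set.range (Complex.ofReal) →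
      ∀ z : ℂ,
        (stereo z ∈ affineSpan ℝ
            ({stereo a, stereo b, ((0 : ℝ), (0 : ℝ), (1 / 2 : ℝ))} : Set (ℝ × ℝ × ℝ)) ↔
          ‖z -
              (a * (1 - (‖b‖ : ℂ) ^ 2) - b * (1 - (‖a‖ : ℂ) ^ 2)) /
                (b * conj a - a * conj b)‖ =
            ‖a - b‖ * ‖1 + a * conj b‖ /
              ‖a * conj b - conj a * b‖)) ∧
    (‖a‖ ≠ ‖b‖ →
      ∀ z : ℂ,
        (dot3 (stereo z - ((0 : ℝ), (0 : ℝ), (1 / 2 : ℝ))) (stereo b - stereo a) = 0 ↔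
          ‖z -
              (b * (1 + (‖a‖ : ℂ) ^ 2) - a * (1 + (‖b‖ : ℂ) ^ 2)) /
                ((‖a‖ : ℂ) ^ 2 - (‖b‖ : ℂ) ^ 2)‖ =
            ‖a - b‖ *
                Real.sqrt ((1 + ‖a‖ ^ 2) * (1 + ‖b‖ ^ 2)) /
              |‖a‖ ^ 2 - ‖b‖ ^ 2|)) :=
  stmt19_general a b
end
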